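/- arXiv:1203.4724 — 3 statements merged into one kernel-verified Lean document; each statement's English description precedes it below -/
import Mathlib

section
/- Let p ≥ 1, θ ∈ ℝ^p, σ > 0, and let X be a random vector in ℝ^p with density x ↦ (2πσ²)^{-p/2} exp(-‖x-θ‖²/(2σ²)) with respect to Lebesgue measure. Let g : ℝ^p → ℝ^p be continuously differentiable and suppose that the functions x ↦ ‖g(x)‖, x ↦ (x-θ)·g(x) and x ↦ |∂g_i/∂x_i(x)| for each i are integrable with respect to this Gaussian density. Then E[(X-θ)·g(X)] = σ² E[div g(X)], where div g(x) = ∑_{i=1}^p ∂g_i/∂x_i(x). (Stein's lemma, Lemma 3.1.) -/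
open MeasureTheory Real
open scoped RealInnerProductSpace

/-- Divergence of a vector field on `EuclideanSpace ℝ (Fin p)`:
`div g x = ∑ i, ∂gᵢ/∂xᵢ (x)`. -/
noncomputable def vdiv {p : ℕ} (g : EuclideanSpace ℝ (Fin p) → EuclideanSpace ℝ (Fin p))
    (x : EuclideanSpace ℝ (Fin p)) : ℝ :=
  ∑ i, fderiv ℝ g x (EuclideanSpace.single i 1) i

/-- The density of the `N(θ, σ²I)` distribution on `EuclideanSpace ℝ (Fin p)` with respect to
Lebesgue measure. -/
noncomputable def gaussDensity {p : ℕ} (θ : EuclideanSpace ℝ (Fin p)) (σ : ℝ)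
    (x : EuclideanSpace ℝ (Fin p)) : ℝ :=
  (2 * π * σ ^ 2) ^ (-(p : ℝ) / 2) * Real.exp (-‖x - θ‖ ^ 2 / (2 * σ ^ 2))

/-!
Write `γ` for the Gaussian density. Since `∇γ(x) = -γ(x) (x - θ) / σ²`, the product rule gives
`div (γ g) = γ div g - ⟪x - θ, g⟫ γ / σ²`, so the theorem says that the integrable vector field
`γ g`, whose divergence is integrable, has `∫ div (γ g) = 0`. This holds for every such `C¹`
field `h`: integrating by parts against the cutoffs `χ_R = χ(· / R)` gives
`∫ div h · χ_R = -∫ Dχ_R (h)`, which is `O(‖h‖₁ / R)`, while the left side tends to `∫ div h`.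
-/

open Filter Topology

section Cutoff

variable {E : Type*} [NormedAddCommGroup E] [NormedSpace ℝ E] [FiniteDimensional ℝ E]

noncomputable def unitBump : ContDiffBump (0 : E) := ⟨1, 2, one_pos, one_lt_two⟩

noncomputable def cutoff (R : ℝ) (x : E) : ℝ := (unitBump : ContDiffBump (0 : E)) (R⁻¹ • x)

lemma contDiff_cutoff (R : ℝ) : ContDiff ℝ 1 (cutoff (E := E) R) :=
  unitBump.contDiff.comp (contDiff_const_smul _)

lemma hasCompactSupport_cutoff {R : ℝ} (hR : R ≠ 0) : HasCompactSupport (cutoff (E := E) R) :=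
  unitBump.hasCompactSupport.comp_smul (inv_ne_zero hR)

lemma abs_cutoff_le_one (R : ℝ) (x : E) : |cutoff R x| ≤ 1 := by
  rw [cutoff, abs_of_nonneg unitBump.nonneg]
  exact unitBump.le_one

lemma tendsto_cutoff_atTop (x : E) : Tendsto (fun R => cutoff R x) atTop (𝓝 1) := by
  refine tendsto_const_nhds.congr' ?_
  filter_upwards [eventually_gt_atTop ‖x‖, eventually_gt_atTop 0] with R hxR hR
  refine (unitBump.one_of_mem_closedBall (c := (0 : E)) ?_).symm
  rw [mem_closedBall_zero_iff, norm_smul, norm_inv, Real.norm_of_nonneg hR.le]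
  exact inv_mul_le_one_of_le₀ hxR.le hR.le

lemma exists_norm_fderiv_cutoff_le :
    ∃ C, ∀ R > 0, ∀ x : E, ‖fderiv ℝ (cutoff R) x‖ ≤ C / R := by
  obtain ⟨C, hC⟩ := ((unitBump (E := E)).contDiff.continuous_fderiv
    one_ne_zero).bounded_above_of_compact_support (unitBump.hasCompactSupport.fderiv ℝ)
  refine ⟨C, fun R hR x => ?_⟩
  rw [show cutoff R = fun x : E => (unitBump : ContDiffBump (0 : E)) (R⁻¹ • x) from rfl,
    fderiv_comp_smul, norm_smul, norm_inv, Real.norm_of_nonneg hR.le, inv_mul_eq_div]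
  exact div_le_div_of_nonneg_right (hC _) hR.le

end Cutoff

section Coordinates

variable {ι E : Type*} [Fintype ι] [NormedAddCommGroup E] [NormedSpace ℝ E]

lemma ContinuousLinearMap.apply_eq_sum_mul_single [DecidableEq ι]
    (L : EuclideanSpace ℝ ι →L[ℝ] ℝ) (y : EuclideanSpace ℝ ι) :
    L y = ∑ i, y i * L (EuclideanSpace.single i 1) := by
  conv_lhs => rw [← (EuclideanSpace.basisFun ι ℝ).sum_repr y]
  simp [map_sum, map_smul]

lemma fderiv_coord_apply {h : E → EuclideanSpace ℝ ι} {x : E} (hh : DifferentiableAt ℝ h x)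
    (i : ι) (v : E) : fderiv ℝ (fun x => h x i) x v = fderiv ℝ h x v i :=
  congrArg (fun L => L v) ((EuclideanSpace.proj i).hasFDerivAt.comp x hh.hasFDerivAt).fderiv

lemma ContDiff.continuous_fderiv_apply_coord {h : E → EuclideanSpace ℝ ι} (hh : ContDiff ℝ 1 h)
    (v : E) (i : ι) : Continuous fun x => fderiv ℝ h x v i :=
  (EuclideanSpace.proj i).continuous.comp
    ((hh.continuous_fderiv one_ne_zero).clm_apply continuous_const)

end Coordinates

section Divergence

variable {p : ℕ}

lemma vdiv_smul {f : EuclideanSpace ℝ (Fin p) → ℝ}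
    {h : EuclideanSpace ℝ (Fin p) → EuclideanSpace ℝ (Fin p)} {x : EuclideanSpace ℝ (Fin p)}
    (hf : DifferentiableAt ℝ f x) (hh : DifferentiableAt ℝ h x) :
    vdiv (f • h) x = f x * vdiv h x + fderiv ℝ f x (h x) := by
  rw [vdiv, vdiv, (fderiv ℝ f x).apply_eq_sum_mul_single, Finset.mul_sum,
    ← Finset.sum_add_distrib]
  refine Finset.sum_congr rfl fun i _ => ?_
  rw [fderiv_smul hf hh]
  simp [mul_comm]

lemma integral_vdiv_mul_eq_neg_integral_fderiv
    {h : EuclideanSpace ℝ (Fin p) → EuclideanSpace ℝ (Fin p)} (hh : ContDiff ℝ 1 h)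
    {χ : EuclideanSpace ℝ (Fin p) → ℝ} (hχ : ContDiff ℝ 1 χ) (hχc : HasCompactSupport χ) :
    ∫ x, vdiv h x * χ x = -∫ x, fderiv ℝ χ x (h x) := by
  have hhd : Differentiable ℝ h := hh.differentiable one_ne_zero
  have hleft (i : Fin p) :
      Integrable fun x => fderiv ℝ h x (EuclideanSpace.single i 1) i * χ x :=
    ((hh.continuous_fderiv_apply_coord _ i).mul hχ.continuous).integrable_of_hasCompactSupport
      hχc.mul_left
  have hright (i : Fin p) :
      Integrable fun x => h x i * fderiv ℝ χ x (EuclideanSpace.single i 1) :=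
    Continuous.integrable_of_hasCompactSupport
      (((EuclideanSpace.proj i).continuous.comp hh.continuous).mul
        ((hχ.continuous_fderiv one_ne_zero).clm_apply continuous_const))
      (hχc.fderiv_apply ℝ _).mul_left
  have hibp (i : Fin p) :
      ∫ x, fderiv ℝ h x (EuclideanSpace.single i 1) i * χ x
        = -∫ x, h x i * fderiv ℝ χ x (EuclideanSpace.single i 1) := by
    rw [integral_mul_fderiv_eq_neg_fderiv_mul_of_integrable, neg_neg]
    · simp only [fderiv_coord_apply (hhd _)]
    · simpa only [fderiv_coord_apply (hhd _)] using hleft i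
    · exact hright i
    · exact (((EuclideanSpace.proj i).continuous.comp hh.continuous).mul
        hχ.continuous).integrable_of_hasCompactSupport hχc.mul_left
    · exact fun x _ => ((EuclideanSpace.proj (𝕜 := ℝ) i).differentiable.comp hhd) x
    · exact fun x _ => hχ.differentiable one_ne_zero x
  calc ∫ x, vdiv h x * χ x
      = ∑ i, ∫ x, fderiv ℝ h x (EuclideanSpace.single i 1) i * χ x := by
        simp only [vdiv, Finset.sum_mul]
        exact integral_finsetSum _ fun i _ => hleft i
    _ = -∫ x, ∑ i, h x i * fderiv ℝ χ x (EuclideanSpace.single i 1) := by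
        rw [integral_finsetSum _ fun i _ => hright i, ← Finset.sum_neg_distrib]
        exact Finset.sum_congr rfl fun i _ => hibp i
    _ = -∫ x, fderiv ℝ χ x (h x) := by
        simp only [← ContinuousLinearMap.apply_eq_sum_mul_single]

theorem integral_vdiv_eq_zero {h : EuclideanSpace ℝ (Fin p) → EuclideanSpace ℝ (Fin p)}
    (hh : ContDiff ℝ 1 h) (hi : Integrable h) (hdiv : Integrable (vdiv h)) :
    ∫ x, vdiv h x = 0 := by
  have htest : Tendsto (fun R => ∫ x, vdiv h x * cutoff R x) atTop (𝓝 (∫ x, vdiv h x)) := by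
    refine tendsto_integral_filter_of_dominated_convergence (fun x => ‖vdiv h x‖)
      (Eventually.of_forall fun R =>
        hdiv.aestronglyMeasurable.mul (contDiff_cutoff R).continuous.aestronglyMeasurable)
      (Eventually.of_forall fun R => ae_of_all _ fun x => ?_) hdiv.norm
      (ae_of_all _ fun x => by simpa using (tendsto_cutoff_atTop x).const_mul (vdiv h x))
    rw [norm_mul, Real.norm_eq_abs (cutoff R x)]
    exact mul_le_of_le_one_right (norm_nonneg _) (abs_cutoff_le_one R x)
  obtain ⟨C, hC⟩ := exists_norm_fderiv_cutoff_le (E := EuclideanSpace ℝ (Fin p))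
  have hvanish : Tendsto (fun R => ∫ x, vdiv h x * cutoff R x) atTop (𝓝 0) := by
    refine squeeze_zero_norm' (a := fun R => C / R * ∫ x, ‖h x‖) ?_ ?_
    · filter_upwards [eventually_gt_atTop 0] with R hR
      rw [integral_vdiv_mul_eq_neg_integral_fderiv hh (contDiff_cutoff R)
        (hasCompactSupport_cutoff hR.ne'), norm_neg, ← integral_const_mul]
      refine norm_integral_le_of_norm_le (hi.norm.const_mul _) (ae_of_all _ fun x => ?_)
      exact (ContinuousLinearMap.le_opNorm _ _).trans
        (mul_le_mul_of_nonneg_right (hC R hR x) (norm_nonneg _))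
    · simpa using (tendsto_const_nhds.div_atTop tendsto_id).mul_const (∫ x, ‖h x‖)
  exact tendsto_nhds_unique htest hvanish

end Divergence

section Gaussian

variable {p : ℕ} (θ : EuclideanSpace ℝ (Fin p)) (σ : ℝ)

lemma contDiff_gaussDensity {n : WithTop ℕ∞} : ContDiff ℝ n (gaussDensity θ σ) := by
  have hsq : ContDiff ℝ n fun x : EuclideanSpace ℝ (Fin p) => ‖x - θ‖ ^ 2 :=
    (contDiff_norm_sq ℝ).comp (contDiff_id.sub contDiff_const)
  exact contDiff_const.mul (hsq.neg.div_const _).exp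

lemma gaussDensity_nonneg (x : EuclideanSpace ℝ (Fin p)) : 0 ≤ gaussDensity θ σ x := by
  unfold gaussDensity
  positivity

lemma fderiv_gaussDensity_apply (x v : EuclideanSpace ℝ (Fin p)) :
    fderiv ℝ (gaussDensity θ σ) x v = -(⟪x - θ, v⟫ / σ ^ 2) * gaussDensity θ σ x := by
  have hsq := ((hasFDerivAt_id x).sub_const θ).norm_sq
  have hγ : HasFDerivAt (gaussDensity θ σ) _ x :=
    (hsq.neg.mul_const (2 * σ ^ 2)⁻¹).exp.const_mul ((2 * π * σ ^ 2) ^ (-(p : ℝ) / 2))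
  rw [hγ.fderiv]
  simp only [smul_apply, neg_apply, ContinuousLinearMap.coe_comp, Function.comp_apply,
    ContinuousLinearMap.id_apply, innerSL_apply_apply, smul_eq_mul, nsmul_eq_mul, id, Pi.neg_apply,
    Nat.cast_ofNat, gaussDensity, div_eq_mul_inv]
  ring

end Gaussian

section Integrability

variable {p : ℕ} {μ : Measure (EuclideanSpace ℝ (Fin p))}
  {g : EuclideanSpace ℝ (Fin p) → EuclideanSpace ℝ (Fin p)} {w : EuclideanSpace ℝ (Fin p) → ℝ}

lemma integrable_smul_of_integrable_norm_mul (hg : Continuous g) (hw : Continuous w)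
    (hw₀ : ∀ x, 0 ≤ w x) (hi : Integrable (fun x => ‖g x‖ * w x) μ) :
    Integrable (fun x => w x • g x) μ := by
  refine hi.mono' (hw.smul hg).aestronglyMeasurable (ae_of_all _ fun x => ?_)
  rw [norm_smul, Real.norm_of_nonneg (hw₀ x), mul_comm]

lemma integrable_vdiv_mul (hg : ContDiff ℝ 1 g) (hw : Continuous w) (hw₀ : ∀ x, 0 ≤ w x)
    (hi : ∀ i, Integrable (fun x => |fderiv ℝ g x (EuclideanSpace.single i 1) i| * w x) μ) :
    Integrable (fun x => vdiv g x * w x) μ := by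
  simp only [vdiv, Finset.sum_mul]
  refine integrable_finsetSum _ fun i _ => (hi i).mono' ?_ (ae_of_all _ fun x => ?_)
  · exact ((hg.continuous_fderiv_apply_coord _ i).mul hw).aestronglyMeasurable
  · rw [norm_mul, Real.norm_eq_abs, Real.norm_of_nonneg (hw₀ x)]

end Integrability

theorem stein_lemma_general (p : ℕ) (θ : EuclideanSpace ℝ (Fin p)) (σ : ℝ) (hσ : 0 < σ)
    (g : EuclideanSpace ℝ (Fin p) → EuclideanSpace ℝ (Fin p)) (hg : ContDiff ℝ 1 g)
    (hint1 : Integrable (fun x => ‖g x‖ * gaussDensity θ σ x))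
    (hint2 : Integrable (fun x => ⟪x - θ, g x⟫ * gaussDensity θ σ x))
    (hint3 : ∀ i : Fin p, Integrable
      (fun x => |fderiv ℝ g x (EuclideanSpace.single i 1) i| * gaussDensity θ σ x)) :
    ∫ x, ⟪x - θ, g x⟫ * gaussDensity θ σ x =
      σ ^ 2 * ∫ x, vdiv g x * gaussDensity θ σ x := by
  set γ := gaussDensity θ σ
  have hγ : ContDiff ℝ 1 γ := contDiff_gaussDensity θ σ
  have hdiv : vdiv (γ • g) = fun x => vdiv g x * γ x - ⟪x - θ, g x⟫ * γ x / σ ^ 2 := by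
    ext x
    rw [vdiv_smul (hγ.differentiable one_ne_zero x) (hg.differentiable one_ne_zero x),
      fderiv_gaussDensity_apply]
    ring
  have hdivg := integrable_vdiv_mul hg hγ.continuous (gaussDensity_nonneg θ σ) hint3
  have hzero := integral_vdiv_eq_zero (hγ.smul hg)
    (integrable_smul_of_integrable_norm_mul hg.continuous hγ.continuous
      (gaussDensity_nonneg θ σ) hint1)
    (hdiv ▸ hdivg.sub (hint2.div_const _))
  rw [hdiv, integral_sub hdivg (hint2.div_const _), integral_div, sub_eq_zero,
    eq_div_iff (by positivity)] at hzero
  rw [← hzero, mul_comm]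

/-- **Stein's lemma** (Lemma 3.1): if `X ~ N(θ, σ²I)` and `g` is continuously differentiable
with the relevant integrability conditions, then
`E[(X - θ) ⬝ g(X)] = σ² E[div g (X)]`. -/
theorem stein_lemma (p : ℕ) (hp : 1 ≤ p) (θ : EuclideanSpace ℝ (Fin p)) (σ : ℝ) (hσ : 0 < σ)
    (g : EuclideanSpace ℝ (Fin p) → EuclideanSpace ℝ (Fin p)) (hg : ContDiff ℝ 1 g)
    (hint1 : Integrable (fun x => ‖g x‖ * gaussDensity θ σ x))
    (hint2 : Integrable (fun x => ⟪x - θ, g x⟫ * gaussDensity θ σ x))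
    (hint3 : ∀ i : Fin p, Integrable
      (fun x => |fderiv ℝ g x (EuclideanSpace.single i 1) i| * gaussDensity θ σ x)) :
    ∫ x, ⟪x - θ, g x⟫ * gaussDensity θ σ x =
      σ ^ 2 * ∫ x, vdiv g x * gaussDensity θ σ x :=
  stein_lemma_general p θ σ hσ g hg hint1 hint2 hint3
end

section
/- Let p, k be positive integers, B ∈ ℝ, and let f : [0,∞) → [0,∞) be measurable with 0 < ∫_0^∞ w^{(p+k)/2 + B + 1} f(w) dw < ∞. Let ρ : ℝ^p → [0,∞) be measurable, and fix x ∈ ℝ^p and u ∈ ℝ^k with u ≠ 0. Write t(θ) = ‖x-θ‖² + ‖u‖² and c = (p+k)/2 + B + 2, and assume ∫_{ℝ^p} t(θ)^{-c} ρ(θ) dθ and ∫_{ℝ^p} ‖θ‖ t(θ)^{-c} ρ(θ) dθ are finite with the former positive. Then, as vectors in ℝ^p, [∫_{ℝ^p} ∫_0^∞ θ · η^{(p+k)/2 + B + 1} f(η·t(θ)) ρ(θ) dη dθ] / [∫_{ℝ^p} ∫_0^∞ η^{(p+k)/2 + B + 1} f(η·t(θ)) ρ(θ) dη dθ] = [∫_{ℝ^p}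 θ · t(θ)^{-c} ρ(θ) dθ] / [∫_{ℝ^p} t(θ)^{-c} ρ(θ) dθ]. In particular, the generalized Bayes estimator E[θη | X,U]/E[η | X,U] for the model (X,U) ~ η^{(p+k)/2} f(η(‖x-θ‖²+‖u‖²)) with prior ρ(θ)η^B under loss η‖δ-θ‖² does not depend on f. (Lemma 6.1.) -/
open MeasureTheory Real

/-! Substituting `w = η t(θ)` in the inner integral gives
`∫₀^∞ η^a f(η t) dη = t^{-(a+1)} ∫₀^∞ w^a f(w) dw`, so the joint posterior weight of `θ` is the
`f`-free weight `t(θ)^{-c} ρ(θ)` times a positive constant, which cancels in the posterior mean. -/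

theorem integral_Ioi_rpow_mul_comp_mul (f : ℝ → ℝ) (a : ℝ) {t : ℝ} (ht : 0 < t) :
    ∫ η in Set.Ioi (0 : ℝ), η ^ a * f (η * t) =
      t ^ (-(a + 1)) * ∫ w in Set.Ioi (0 : ℝ), w ^ a * f w := by
  have hsubst : ∫ η in Set.Ioi (0 : ℝ), (η * t) ^ a * f (η * t) =
      t⁻¹ * ∫ w in Set.Ioi (0 : ℝ), w ^ a * f w := by
    simpa [smul_eq_mul] using integral_comp_mul_right_Ioi (fun w => w ^ a * f w) 0 ht
  calc ∫ η in Set.Ioi (0 : ℝ), η ^ a * f (η * t)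
      = ∫ η in Set.Ioi (0 : ℝ), t ^ (-a) * ((η * t) ^ a * f (η * t)) := by
        refine setIntegral_congr_fun measurableSet_Ioi fun η hη => ?_
        rw [mul_rpow (le_of_lt hη) ht.le, rpow_neg ht.le]
        field_simp
    _ = t ^ (-a) * (t⁻¹ * ∫ w in Set.Ioi (0 : ℝ), w ^ a * f w) := by
        rw [integral_const_mul, hsubst]
    _ = t ^ (-(a + 1)) * ∫ w in Set.Ioi (0 : ℝ), w ^ a * f w := by
        rw [← mul_assoc, ← rpow_neg_one t, ← rpow_add ht, neg_add]

section WeightedMean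

variable {α E : Type*} [MeasurableSpace α] [NormedAddCommGroup E] [NormedSpace ℝ E]

noncomputable def weightedMean (μ : Measure α) (w : α → ℝ) (v : α → E) : E :=
  (∫ a, w a ∂μ)⁻¹ • ∫ a, w a • v a ∂μ

theorem weightedMean_const_mul (μ : Measure α) (w : α → ℝ) (v : α → E) {c : ℝ} (hc : c ≠ 0) :
    weightedMean μ (fun a => c * w a) v = weightedMean μ w v := by
  unfold weightedMean
  simp_rw [mul_smul]
  rw [integral_const_mul, integral_smul, smul_smul, mul_inv, mul_right_comm,
    inv_mul_cancel₀ hc, one_mul]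

end WeightedMean

theorem generalized_bayes_independent_of_f_general (p k : ℕ) (B : ℝ)
    (f : ℝ → ℝ)
    (hfpos : 0 < ∫ w in Set.Ioi (0 : ℝ), w ^ (((p : ℝ) + k) / 2 + B + 1) * f w)
    (ρ : EuclideanSpace ℝ (Fin p) → ℝ)
    (x : EuclideanSpace ℝ (Fin p)) (u : EuclideanSpace ℝ (Fin k)) (hu : u ≠ 0) :
    (∫ ϑ : EuclideanSpace ℝ (Fin p),
          (∫ η in Set.Ioi (0 : ℝ),
            η ^ (((p : ℝ) + k) / 2 + B + 1) * f (η * (‖x - ϑ‖ ^ 2 + ‖u‖ ^ 2)) * ρ ϑ))⁻¹ •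
        (∫ ϑ : EuclideanSpace ℝ (Fin p),
          (∫ η in Set.Ioi (0 : ℝ),
            η ^ (((p : ℝ) + k) / 2 + B + 1) * f (η * (‖x - ϑ‖ ^ 2 + ‖u‖ ^ 2)) * ρ ϑ) • ϑ) =
      (∫ ϑ : EuclideanSpace ℝ (Fin p),
          (‖x - ϑ‖ ^ 2 + ‖u‖ ^ 2) ^ (-(((p : ℝ) + k) / 2 + B + 2)) * ρ ϑ)⁻¹ •
        (∫ ϑ : EuclideanSpace ℝ (Fin p),
          ((‖x - ϑ‖ ^ 2 + ‖u‖ ^ 2) ^ (-(((p : ℝ) + k) / 2 + B + 2)) * ρ ϑ) • ϑ) := by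
  set a : ℝ := ((p : ℝ) + k) / 2 + B + 1
  set I : ℝ := ∫ w in Set.Ioi (0 : ℝ), w ^ a * f w
  have ht : ∀ ϑ : EuclideanSpace ℝ (Fin p), 0 < ‖x - ϑ‖ ^ 2 + ‖u‖ ^ 2 := fun ϑ => by
    have := norm_pos_iff.mpr hu
    positivity
  have hweight : ∀ ϑ : EuclideanSpace ℝ (Fin p),
      ∫ η in Set.Ioi (0 : ℝ), η ^ a * f (η * (‖x - ϑ‖ ^ 2 + ‖u‖ ^ 2)) * ρ ϑ =
        I * ((‖x - ϑ‖ ^ 2 + ‖u‖ ^ 2) ^ (-(((p : ℝ) + k) / 2 + B + 2)) * ρ ϑ) := fun ϑ => by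
    rw [integral_mul_const, integral_Ioi_rpow_mul_comp_mul f a (ht ϑ),
      show -(a + 1) = -(((p : ℝ) + k) / 2 + B + 2) by ring]
    ring
  simp only [hweight]
  exact weightedMean_const_mul volume _ id hfpos.ne'

/-- **Lemma 6.1** (Maruyama): for the model `(X,U) ~ η^{(p+k)/2} f(η(‖x-θ‖²+‖u‖²))` with
prior `ρ(θ) η^B` and loss `η‖δ-θ‖²`, the generalized Bayes estimator
`E[θη|X,U]/E[η|X,U]` does not depend on `f`: it equals the ratio of the integrals of
`θ t(θ)^{-c} ρ(θ)` and `t(θ)^{-c} ρ(θ)`, where `t(θ) = ‖x-θ‖² + ‖u‖²` and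
`c = (p+k)/2 + B + 2`. -/
theorem generalized_bayes_independent_of_f (p k : ℕ) (hp : 0 < p) (hk : 0 < k) (B : ℝ)
    (f : ℝ → ℝ) (hf : ∀ t, 0 ≤ f t) (hfm : Measurable f)
    (hfint : IntegrableOn (fun w => w ^ (((p : ℝ) + k) / 2 + B + 1) * f w) (Set.Ioi 0))
    (hfpos : 0 < ∫ w in Set.Ioi (0 : ℝ), w ^ (((p : ℝ) + k) / 2 + B + 1) * f w)
    (ρ : EuclideanSpace ℝ (Fin p) → ℝ) (hρ : ∀ ϑ, 0 ≤ ρ ϑ) (hρm : Measurable ρ)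
    (x : EuclideanSpace ℝ (Fin p)) (u : EuclideanSpace ℝ (Fin k)) (hu : u ≠ 0)
    (hden : Integrable (fun ϑ : EuclideanSpace ℝ (Fin p) =>
      (‖x - ϑ‖ ^ 2 + ‖u‖ ^ 2) ^ (-(((p : ℝ) + k) / 2 + B + 2)) * ρ ϑ))
    (hdenpos : 0 < ∫ ϑ : EuclideanSpace ℝ (Fin p),
      (‖x - ϑ‖ ^ 2 + ‖u‖ ^ 2) ^ (-(((p : ℝ) + k) / 2 + B + 2)) * ρ ϑ)
    (hnum : Integrable (fun ϑ : EuclideanSpace ℝ (Fin p) =>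
      ‖ϑ‖ * ((‖x - ϑ‖ ^ 2 + ‖u‖ ^ 2) ^ (-(((p : ℝ) + k) / 2 + B + 2)) * ρ ϑ))) :
    (∫ ϑ : EuclideanSpace ℝ (Fin p),
          (∫ η in Set.Ioi (0 : ℝ),
            η ^ (((p : ℝ) + k) / 2 + B + 1) * f (η * (‖x - ϑ‖ ^ 2 + ‖u‖ ^ 2)) * ρ ϑ))⁻¹ •
        (∫ ϑ : EuclideanSpace ℝ (Fin p),
          (∫ η in Set.Ioi (0 : ℝ),
            η ^ (((p : ℝ) + k) / 2 + B + 1) * f (η * (‖x - ϑ‖ ^ 2 + ‖u‖ ^ 2)) * ρ ϑ) • ϑ) =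
      (∫ ϑ : EuclideanSpace ℝ (Fin p),
          (‖x - ϑ‖ ^ 2 + ‖u‖ ^ 2) ^ (-(((p : ℝ) + k) / 2 + B + 2)) * ρ ϑ)⁻¹ •
        (∫ ϑ : EuclideanSpace ℝ (Fin p),
          ((‖x - ϑ‖ ^ 2 + ‖u‖ ^ 2) ^ (-(((p : ℝ) + k) / 2 + B + 2)) * ρ ϑ) • ϑ) :=
  generalized_bayes_independent_of_f_general p k B f hfpos ρ x u hu
end

section
/- Let p ≥ 1 be an integer, b > 0, a ∈ ℝ, η > 0, and θ ∈ ℝ^p with θ ≠ 0. Then ∫_0^1 (ηλ/(2π(1-λ)))^{p/2} exp(-ηλ‖θ‖²/(2(1-λ))) · η^{b/2 - p/2 + a} λ^{b/2 - p/2 - 1} (1-λ)^{p/2 - b/2 - 1} dλ = (2π)^{-p/2} 2^{b/2} Γ(b/2) · η^a ‖θ‖^{-b}. In other words, the hierarchical prior in which θ given (η,λ) is N(0, ((1-λ)/(ηλ))I) and (η,λ) has density proportional to η^{b/2 - p/2 + a} λ^{b/2 - p/2 - 1} (1-λ)^{-b/2 + p/2 - 1} on (0,∞)×(0,1) has unconditional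 density on (θ,η) proportional to η^a ‖θ‖^{-b}. (Lemma 6.2, part 2.) -/
/-!
Substituting `t = λ/(1-λ)`, which maps `(0,1)` onto `(0,∞)` with `dt = dλ/(1-λ)²`, turns the
integrand into `(2π)^{-p/2} η^{b/2+a} t^{b/2-1} e^{-ct}` with `c = η‖θ‖²/2`. The Gamma integral
`∫₀^∞ t^{s-1} e^{-ct} dt = Γ(s) c^{-s}` at `s = b/2` then gives `2^{b/2} Γ(b/2) η^a ‖θ‖^{-b}`
times the Gaussian constant.
-/

open MeasureTheory Real Set

theorem image_div_one_sub_Ioo : (fun l : ℝ => l / (1 - l)) '' Ioo 0 1 = Ioi 0 := by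
  ext t
  simp only [mem_image, mem_Ioo, mem_Ioi]
  constructor
  · rintro ⟨l, ⟨hl0, hl1⟩, rfl⟩
    exact div_pos hl0 (by linarith)
  · intro ht
    refine ⟨t / (1 + t), ⟨by positivity, (div_lt_one (by linarith)).2 (by linarith)⟩, ?_⟩
    have : (1 : ℝ) + t ≠ 0 := by positivity
    field_simp
    ring

theorem injOn_div_one_sub_Ioo : InjOn (fun l : ℝ => l / (1 - l)) (Ioo 0 1) := by
  intro x hx y hy h
  rw [div_eq_div_iff (by linarith [hx.2]) (by linarith [hy.2])] at h
  linear_combination h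

theorem hasDerivAt_div_one_sub {x : ℝ} (hx : x ≠ 1) :
    HasDerivAt (fun l : ℝ => l / (1 - l)) ((1 - x) ^ 2)⁻¹ x := by
  have hx' : 1 - x ≠ 0 := sub_ne_zero.2 (Ne.symm hx)
  refine ((hasDerivAt_id' x).div ((hasDerivAt_id' x).const_sub 1) hx').congr_deriv ?_
  field_simp
  ring

theorem integral_Ioo_comp_div_one_sub {E : Type*} [NormedAddCommGroup E] [NormedSpace ℝ E]
    (f : ℝ → E) :
    ∫ l in Ioo 0 1, ((1 - l) ^ 2)⁻¹ • f (l / (1 - l)) = ∫ t in Ioi 0, f t := by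
  rw [← image_div_one_sub_Ioo, integral_image_eq_integral_abs_deriv_smul measurableSet_Ioo
    (fun x hx => (hasDerivAt_div_one_sub hx.2.ne).hasDerivWithinAt) injOn_div_one_sub_Ioo]
  refine setIntegral_congr_fun measurableSet_Ioo fun l hl => ?_
  have : 0 < 1 - l := by linarith [hl.2]
  rw [abs_of_pos (by positivity)]

theorem gaussian_mixture_integrand_eq {q k a η r l : ℝ} (hη : 0 < η) (hl : l ∈ Ioo 0 1) :
    (η * l / (2 * π * (1 - l))) ^ q * exp (-(η * l * r ^ 2) / (2 * (1 - l))) *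
        η ^ (k - q + a) * l ^ (k - q - 1) * (1 - l) ^ (q - k - 1) =
      (2 * π) ^ (-q) * η ^ (k + a) *
        (((1 - l) ^ 2)⁻¹ • ((l / (1 - l)) ^ (k - 1) * exp (-(η * r ^ 2 / 2 * (l / (1 - l)))))) := by
  obtain ⟨hl0, hl1⟩ := hl
  have h1l : 0 < 1 - l := by linarith
  have h2π : 0 < 2 * π := by positivity
  have hexp : -(η * l * r ^ 2) / (2 * (1 - l)) = -(η * r ^ 2 / 2 * (l / (1 - l))) := by
    field_simp
  have hinv : ((1 - l) ^ 2)⁻¹ = exp (-(2 * log (1 - l))) := by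
    rw [exp_neg, show 2 * log (1 - l) = log ((1 - l) ^ 2) by simp [log_pow],
      exp_log (by positivity)]
  rw [smul_eq_mul, hexp, hinv]
  simp only [rpow_def_of_pos (by positivity : 0 < η * l / (2 * π * (1 - l))),
    rpow_def_of_pos hη, rpow_def_of_pos hl0, rpow_def_of_pos h1l, rpow_def_of_pos h2π,
    rpow_def_of_pos (by positivity : 0 < l / (1 - l)), ← exp_add, exp_eq_exp]
  rw [log_div (by positivity) (by positivity), log_mul hη.ne' hl0.ne',
    log_mul h2π.ne' h1l.ne', log_div hl0.ne' h1l.ne']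
  ring

theorem rpow_add_mul_one_div_half_mul_sq_rpow {η r : ℝ} (hη : 0 < η) (hr : 0 < r) (a b : ℝ) :
    η ^ (b / 2 + a) * (1 / (η * r ^ 2 / 2)) ^ (b / 2) = 2 ^ (b / 2) * η ^ a * r ^ (-b) := by
  have hlog : log (1 / (η * r ^ 2 / 2)) = log 2 - (log η + 2 * log r) := by
    rw [one_div, log_inv, log_div (by positivity) two_ne_zero, log_mul hη.ne' (by positivity),
      log_pow]
    push_cast
    ring
  simp only [rpow_def_of_pos hη, rpow_def_of_pos (by positivity : 0 < 1 / (η * r ^ 2 / 2)),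
    rpow_def_of_pos two_pos, rpow_def_of_pos hr, ← exp_add, exp_eq_exp, hlog]
  ring

theorem hierarchical_prior_marginal_general (p : ℕ) (b a η : ℝ) (hb : 0 < b)
    (hη : 0 < η) (θ : EuclideanSpace ℝ (Fin p)) (hθ : θ ≠ 0) :
    ∫ l in Set.Ioo (0 : ℝ) 1,
        (η * l / (2 * π * (1 - l))) ^ ((p : ℝ) / 2) *
          Real.exp (-(η * l * ‖θ‖ ^ 2) / (2 * (1 - l))) *
          η ^ (b / 2 - (p : ℝ) / 2 + a) * l ^ (b / 2 - (p : ℝ) / 2 - 1) *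
          (1 - l) ^ ((p : ℝ) / 2 - b / 2 - 1) =
      (2 * π) ^ (-(p : ℝ) / 2) * 2 ^ (b / 2) * Real.Gamma (b / 2) * η ^ a * ‖θ‖ ^ (-b) := by
  have hθ' : 0 < ‖θ‖ := norm_pos_iff.2 hθ
  rw [setIntegral_congr_fun measurableSet_Ioo fun l hl => gaussian_mixture_integrand_eq hη hl,
    integral_const_mul,
    integral_Ioo_comp_div_one_sub fun t => t ^ (b / 2 - 1) * exp (-(η * ‖θ‖ ^ 2 / 2 * t)),
    integral_rpow_mul_exp_neg_mul_Ioi (by positivity) (by positivity), neg_div]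
  linear_combination (2 * π) ^ (-((p : ℝ) / 2)) * Gamma (b / 2) *
    rpow_add_mul_one_div_half_mul_sq_rpow hη hθ' a b

/-- **Lemma 6.2, part 2**: the hierarchical prior in which `θ | (η,λ) ~ N(0, ((1-λ)/(ηλ))I)`
and `(η,λ)` has density proportional to
`η^{b/2-p/2+a} λ^{b/2-p/2-1} (1-λ)^{-b/2+p/2-1}` on `(0,∞) × (0,1)` has unconditional
density on `(θ,η)` proportional to `η^a ‖θ‖^{-b}`:
`∫_0^1 (ηλ/(2π(1-λ)))^{p/2} exp(-ηλ‖θ‖²/(2(1-λ))) η^{b/2-p/2+a} λ^{b/2-p/2-1}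
  (1-λ)^{p/2-b/2-1} dλ = (2π)^{-p/2} 2^{b/2} Γ(b/2) η^a ‖θ‖^{-b}`. -/
theorem hierarchical_prior_marginal (p : ℕ) (hp : 1 ≤ p) (b a η : ℝ) (hb : 0 < b)
    (hη : 0 < η) (θ : EuclideanSpace ℝ (Fin p)) (hθ : θ ≠ 0) :
    ∫ l in Set.Ioo (0 : ℝ) 1,
        (η * l / (2 * π * (1 - l))) ^ ((p : ℝ) / 2) *
          Real.exp (-(η * l * ‖θ‖ ^ 2) / (2 * (1 - l))) *
          η ^ (b / 2 - (p : ℝ) / 2 + a) * l ^ (b / 2 - (p : ℝ) / 2 - 1) *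
          (1 - l) ^ ((p : ℝ) / 2 - b / 2 - 1) =
      (2 * π) ^ (-(p : ℝ) / 2) * 2 ^ (b / 2) * Real.Gamma (b / 2) * η ^ a * ‖θ‖ ^ (-b) :=
  hierarchical_prior_marginal_general p b a η hb hη θ hθ
end
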